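/- Suppose x̄, x̂ ∈ ℝ^N satisfy ‖x̄‖₂ = 1, ‖x̂‖₂ ≤ 1, ‖x̄ − x̂‖_∞ ≤ 2 componentwise (which follows from the norm bounds), and for constants γ, λ, p, ν > 0, (γλ/p)(1 − x̄ᵀx̂) ≤ ν‖x̄‖₀ − ν‖x̂‖₀ + (ν/2)‖x̄ − x̂‖₁. If additionally (ν/2)‖x̄ − x̂‖₁ ≤ ν‖x̄ − x̂‖₀, then ‖x̄ − x̂‖₂ ≤ √(4pν‖x̄‖₀/(γλ)). -/

import Mathlib

/-!
Expanding the square and using `‖x̄‖₂ = 1`, `‖x̂‖₂ ≤ 1` gives `‖x̄ − x̂‖₂² ≤ 2(1 − x̄ᵀx̂)`.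
Since the support of `x̄ − x̂` lies in the union of the supports of `x̄` and `x̂`, the ℓ₀ terms on the
right of the basic inequality add up to at most `2ν‖x̄‖₀`, so `(γλ/p)(1 − x̄ᵀx̂) ≤ 2ν‖x̄‖₀`.
-/

open Finset

theorem card_filter_sub_ne_zero_le {ι G : Type*} [Fintype ι] [AddGroup G] [DecidableEq G]
    (f g : ι → G) :
    #{i | f i - g i ≠ 0} ≤ #{i | f i ≠ 0} + #{i | g i ≠ 0} := by
  classical
  have hsupp : filter (fun i => f i - g i ≠ 0) univ
      ⊆ filter (fun i => f i ≠ 0) univ ∪ filter (fun i => g i ≠ 0) univ := by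
    intro i
    simp only [mem_filter, mem_union, mem_univ, true_and]
    contrapose!
    rintro ⟨hf, hg⟩
    rw [hf, hg, sub_zero]
  exact (card_le_card hsupp).trans (card_union_le _ _)

theorem sum_sub_sq_le_two_mul_one_sub_sum_mul {ι : Type*} [Fintype ι] {x y : ι → ℝ}
    (hx : ∑ i, x i ^ 2 = 1) (hy : ∑ i, y i ^ 2 ≤ 1) :
    ∑ i, (x i - y i) ^ 2 ≤ 2 * (1 - ∑ i, x i * y i) := by
  have hexpand : ∑ i, (x i - y i) ^ 2 = ∑ i, x i ^ 2 - 2 * ∑ i, x i * y i + ∑ i, y i ^ 2 := by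
    rw [mul_sum, ← sum_sub_distrib, ← sum_add_distrib]
    exact sum_congr rfl fun i _ => by ring
  linarith

theorem error_bound_l0_general {N : ℕ} (xbar xhat : Fin N → ℝ) (γ lam p ν : ℝ)
    (hγ : 0 < γ) (hlam : 0 < lam) (hp : 0 < p) (hν : 0 < ν)
    (hxbar : Real.sqrt (∑ i, (xbar i) ^ 2) = 1)
    (hxhat : Real.sqrt (∑ i, (xhat i) ^ 2) ≤ 1)
    (h : (γ * lam / p) * (1 - ∑ i, xbar i * xhat i)
        ≤ ν * (univ.filter fun i => xbar i ≠ 0).card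
          - ν * (univ.filter fun i => xhat i ≠ 0).card
          + (ν / 2) * ∑ i, |xbar i - xhat i|)
    (hl1l0 : (ν / 2) * ∑ i, |xbar i - xhat i|
        ≤ ν * (univ.filter fun i => xbar i - xhat i ≠ 0).card) :
    Real.sqrt (∑ i, (xbar i - xhat i) ^ 2)
      ≤ Real.sqrt (4 * p * ν * (univ.filter fun i => xbar i ≠ 0).card / (γ * lam)) := by
  have hsupp : (#{i | xbar i - xhat i ≠ 0} : ℝ) ≤ #{i | xbar i ≠ 0} + #{i | xhat i ≠ 0} := by
    exact_mod_cast card_filter_sub_ne_zero_le xbar xhat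
  set A : ℝ := Nat.cast #{i | xbar i ≠ 0}
  have hdist := sum_sub_sq_le_two_mul_one_sub_sum_mul (Real.sqrt_eq_one.1 hxbar)
    (Real.sqrt_le_one.1 hxhat)
  have hgap : γ * lam / p * (1 - ∑ i, xbar i * xhat i) ≤ 2 * ν * A := by
    linarith [mul_le_mul_of_nonneg_left hsupp hν.le]
  have hinner : 1 - ∑ i, xbar i * xhat i ≤ 2 * ν * A / (γ * lam / p) :=
    (le_div_iff₀' (by positivity)).2 hgap
  apply Real.sqrt_le_sqrt
  calc ∑ i, (xbar i - xhat i) ^ 2 ≤ 2 * (1 - ∑ i, xbar i * xhat i) := hdist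
    _ ≤ 2 * (2 * ν * A / (γ * lam / p)) := by gcongr
    _ = 4 * p * ν * A / (γ * lam) := by field_simp; ring

/-- Deterministic core of Theorem 1 for the ℓ0 penalty:
if `‖x̄‖₂ = 1`, `‖x̂‖₂ ≤ 1`, `|x̄ᵢ − x̂ᵢ| ≤ 2` componentwise,
`(γλ/p)(1 − x̄ᵀx̂) ≤ ν‖x̄‖₀ − ν‖x̂‖₀ + (ν/2)‖x̄ − x̂‖₁`, and
`(ν/2)‖x̄ − x̂‖₁ ≤ ν‖x̄ − x̂‖₀`, then `‖x̄ − x̂‖₂ ≤ √(4pν‖x̄‖₀/(γλ))`. -/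
theorem error_bound_l0 {N : ℕ} (xbar xhat : Fin N → ℝ) (γ lam p ν : ℝ)
    (hγ : 0 < γ) (hlam : 0 < lam) (hp : 0 < p) (hν : 0 < ν)
    (hxbar : Real.sqrt (∑ i, (xbar i) ^ 2) = 1)
    (hxhat : Real.sqrt (∑ i, (xhat i) ^ 2) ≤ 1)
    (hcomp : ∀ i, |xbar i - xhat i| ≤ 2)
    (h : (γ * lam / p) * (1 - ∑ i, xbar i * xhat i)
        ≤ ν * (univ.filter fun i => xbar i ≠ 0).card
          - ν * (univ.filter fun i => xhat i ≠ 0).card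
          + (ν / 2) * ∑ i, |xbar i - xhat i|)
    (hl1l0 : (ν / 2) * ∑ i, |xbar i - xhat i|
        ≤ ν * (univ.filter fun i => xbar i - xhat i ≠ 0).card) :
    Real.sqrt (∑ i, (xbar i - xhat i) ^ 2)
      ≤ Real.sqrt (4 * p * ν * (univ.filter fun i => xbar i ≠ 0).card / (γ * lam)) :=
  error_bound_l0_general xbar xhat γ lam p ν hγ hlam hp hν hxbar hxhat h hl1l0
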